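/- For any modal formula A, the following are equivalent: (1) GL proves ⋀Rf(□A) → ¬□A, where Rf(□A) = {□B → B : □B is a subformula of □A}; (2) GL proves ◇^{cx(A)+1}⊤ → ¬□A; (3) GL_ω proves ¬□A; (4) GLS proves ¬□A. -/

import Mathlib

/-- Modal propositional formulas (variables are indexed by `ℕ`). -/
inductive MF : Type
  | var : ℕ → MF
  | fal : MF
  | imp : MF → MF → MF
  | box : MF → MF
deriving DecidableEq

namespace MF

def neg (A : MF) : MF := imp A fal
def top : MF := neg fal
def conj (A B : MF) : MF := neg (imp A (neg B))
def disj (A B : MF) : MF := imp (neg A) B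
def biimp (A B : MF) : MF := conj (imp A B) (imp B A)
def dia (A : MF) : MF := neg (box (neg A))
def boxn : ℕ → MF → MF
  | 0, A => A
  | n+1, A => box (boxn n A)
def dian (n : ℕ) (A : MF) : MF := neg (boxn n (neg A))

/-- Uniform substitution. -/
def subst (s : ℕ → MF) : MF → MF
  | var n => s n
  | fal => fal
  | imp A B => imp (subst s A) (subst s B)
  | box A => box (subst s A)

/-- The set of subformulas. -/
def subF : MF → Finset MF
  | var n => {var n}
  | fal => {fal}
  | imp A B => insert (imp A B) (subF A ∪ subF B)
  | box A => insert (box A) (subF A)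

def isBox : MF → Bool
  | box _ => true
  | _ => false

def unbox : MF → MF
  | box A => A
  | A => A

/-- `cx A` is the number of subformulas of `A` of the form `□C`. -/
def cx (A : MF) : ℕ := ((subF A).filter (fun B => isBox B = true)).card

/-- `Rf(A) = {□B → B : □B ∈ Sub(A)}`. -/
def RfSet (A : MF) : Finset MF :=
  ((subF A).filter (fun B => isBox B = true)).image (fun B => imp B (unbox B))

/-- Conjunction of a finite set of formulas. -/
noncomputable def conjFin (s : Finset MF) : MF := s.toList.foldr conj top

/-- `A` is an instance of a propositional tautology. -/
def TautInst (A : MF) : Prop :=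
  ∀ v : MF → Bool, (∀ B C, v (imp B C) = (!(v B) || v C)) → v fal = false → v A = true

end MF

/-- Provability in the Gödel–Löb logic GL. -/
inductive GLPrv : MF → Prop
  | taut {A} : MF.TautInst A → GLPrv A
  | k (A B : MF) : GLPrv (MF.imp (MF.box (MF.imp A B)) (MF.imp (MF.box A) (MF.box B)))
  | lob (A : MF) : GLPrv (MF.imp (MF.box (MF.imp (MF.box A) A)) (MF.box A))
  | mp {A B} : GLPrv (MF.imp A B) → GLPrv A → GLPrv B
  | nec {A} : GLPrv A → GLPrv (MF.box A)

/-- Provability in GL + Γ: axioms are GL-theorems and substitution instances of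
formulas in Γ; rules are modus ponens (and substitution, built into the axiom rule). -/
inductive ExtPrv (Ax : Set MF) : MF → Prop
  | gl {A} : GLPrv A → ExtPrv Ax A
  | ax {A} (s : ℕ → MF) : A ∈ Ax → ExtPrv Ax (A.subst s)
  | mp {A B} : ExtPrv Ax (MF.imp A B) → ExtPrv Ax A → ExtPrv Ax B

/-- GL_ω = GL + {◇ⁿ⊤ : n ∈ ω}. -/
def GLomegaPrv : MF → Prop := ExtPrv (Set.range fun n => MF.dian n MF.top)

/-- GLS = GL + {□p → p}. -/
def GLSPrv : MF → Prop := ExtPrv {MF.imp (MF.box (MF.var 0)) (MF.var 0)}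

/-- F_s = □^{s+1}⊥ → □^s⊥. -/
def Fmla (s : ℕ) : MF := MF.imp (MF.boxn (s+1) MF.fal) (MF.boxn s MF.fal)

/-- GL + {¬F_s}. -/
def GLFPrv (s : ℕ) : MF → Prop := ExtPrv {MF.neg (Fmla s)}


/-!
Everything is decided in Kripke models of GL (transitive, conversely well-founded), for which
GL is complete by a finite canonical model over the subformulas.

(1) ⇒ (2): `□A` persists along `R`, so by (1) every world of the cone of a world
forcing `□A` refutes some reflection `□E → E` with `□E ∈ Sub(□A)`. The set of boxes of
`Sub(□A)` whose reflection holds then grows strictly along `R`, which bounds the depth by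
`cx A`, so `◇^{cx A + 1}⊤` fails. (2) ⇒ (3) ⇒ (4) since GLS proves every `◇ⁿ⊤`.
(4) ⇒ (1): above a world `w` forcing `⋀Rf(□A) ∧ □A`, put an infinite descending chain of
copies of `w`. Reflection at `w` makes the chain worlds agree with `w` on `Sub(□A)`, so `□A`
holds all along the chain, whereas every theorem of GLS holds at all sufficiently late chain
worlds.
-/

open MF

namespace MF

lemma sizeOf_le_of_mem_subF {B A : MF} (h : B ∈ A.subF) : sizeOf B ≤ sizeOf A := by
  induction A with
  | var n => simp only [subF, Finset.mem_singleton] at h; rw [h]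
  | fal => simp only [subF, Finset.mem_singleton] at h; rw [h]
  | imp A C ihA ihC =>
    simp only [subF, Finset.mem_insert, Finset.mem_union] at h
    rcases h with rfl | h | h
    · rfl
    · have := ihA h; simp only [imp.sizeOf_spec]; omega
    · have := ihC h; simp only [imp.sizeOf_spec]; omega
  | box A ihA =>
    simp only [subF, Finset.mem_insert] at h
    rcases h with rfl | h
    · rfl
    · have := ihA h; simp only [box.sizeOf_spec]; omega

lemma box_notMem_subF (A : MF) : box A ∉ A.subF := fun h => by
  have := sizeOf_le_of_mem_subF h
  simp only [box.sizeOf_spec] at this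
  omega

lemma mem_subF_self (A : MF) : A ∈ A.subF := by
  cases A <;> simp [subF]

lemma subF_subset_of_mem {B A : MF} (h : B ∈ A.subF) : B.subF ⊆ A.subF := by
  induction A with
  | var n => simp only [subF, Finset.mem_singleton] at h; rw [h]
  | fal => simp only [subF, Finset.mem_singleton] at h; rw [h]
  | imp A C ihA ihC =>
    simp only [subF, Finset.mem_insert, Finset.mem_union] at h
    rcases h with rfl | h | h
    · rfl
    · exact (ihA h).trans (Finset.subset_union_left.trans (Finset.subset_insert _ _))
    · exact (ihC h).trans (Finset.subset_union_right.trans (Finset.subset_insert _ _))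
  | box A ihA =>
    simp only [subF, Finset.mem_insert] at h
    rcases h with rfl | h
    · rfl
    · exact (ihA h).trans (Finset.subset_insert _ _)

lemma imp_mem_subF_left {B C X : MF} (h : imp B C ∈ X.subF) : B ∈ X.subF :=
  subF_subset_of_mem h (by simp [subF, mem_subF_self])

lemma imp_mem_subF_right {B C X : MF} (h : imp B C ∈ X.subF) : C ∈ X.subF :=
  subF_subset_of_mem h (by simp [subF, mem_subF_self])

lemma box_mem_subF {B X : MF} (h : box B ∈ X.subF) : B ∈ X.subF :=
  subF_subset_of_mem h (by simp [subF, mem_subF_self])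

lemma box_unbox {E : MF} (h : isBox E = true) : box (unbox E) = E := by
  cases E <;> simp_all [isBox, unbox]

lemma unbox_mem_subF {E X : MF} (hE : E ∈ X.subF) (h : isBox E = true) : unbox E ∈ X.subF :=
  box_mem_subF (box_unbox h ▸ hE)

lemma card_filter_isBox_subF_box (A : MF) :
    ((box A).subF.filter (isBox · = true)).card = cx A + 1 := by
  rw [subF, Finset.filter_insert, if_pos (show isBox (box A) = true from rfl),
    Finset.card_insert_of_notMem fun h => box_notMem_subF A (Finset.mem_of_mem_filter _ h)]
  rfl

lemma subst_boxn (s : ℕ → MF) (n : ℕ) (B : MF) : (boxn n B).subst s = boxn n (B.subst s) := by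
  induction n with
  | zero => rfl
  | succ n ih => simp only [boxn, subst, ih]

lemma subst_dian_top (s : ℕ → MF) (n : ℕ) : (dian n top).subst s = dian n top := by
  simp only [dian, neg, top, subst, subst_boxn]

def signed (b : Bool) (C : MF) : MF := cond b C (neg C)

noncomputable def diagram (s : Finset MF) (g : MF → Bool) : MF :=
  conjFin (s.image fun C => signed (g C) C)

end MF

namespace GLPrv

lemma imp_refl (X : MF) : GLPrv (imp X X) :=
  taut fun v hv _ => by simp only [hv]; cases v X <;> rfl

lemma imp_of {X Y : MF} (h : GLPrv Y) : GLPrv (imp X Y) :=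
  mp (taut fun v hv _ => by simp only [hv]; cases v X <;> cases v Y <;> rfl) h

lemma imp_trans {X Y Z : MF} (h₁ : GLPrv (imp X Y)) (h₂ : GLPrv (imp Y Z)) :
    GLPrv (imp X Z) :=
  mp (mp (taut fun v hv _ => by
    simp only [hv]; cases v X <;> cases v Y <;> cases v Z <;> rfl) h₁) h₂

lemma imp_mp {X Y Z : MF} (h₁ : GLPrv (imp X (imp Y Z))) (h₂ : GLPrv (imp X Y)) :
    GLPrv (imp X Z) :=
  mp (mp (taut fun v hv _ => by
    simp only [hv]; cases v X <;> cases v Y <;> cases v Z <;> rfl) h₁) h₂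

lemma imp_imp_of {X P Q R : MF} (h : GLPrv (imp P (imp Q R))) (hP : GLPrv (imp X P))
    (hQ : GLPrv (imp X Q)) : GLPrv (imp X R) :=
  imp_mp (imp_trans hP h) hQ

lemma top_intro (X : MF) : GLPrv (imp X top) :=
  imp_of (taut fun v hv hf => by simp only [top, neg, hv, hf]; rfl)

lemma conj_left (X Y : MF) : GLPrv (imp (conj X Y) X) :=
  taut fun v hv hf => by simp only [conj, neg, hv, hf]; cases v X <;> cases v Y <;> rfl

lemma conj_right (X Y : MF) : GLPrv (imp (conj X Y) Y) :=
  taut fun v hv hf => by simp only [conj, neg, hv, hf]; cases v X <;> cases v Y <;> rfl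

lemma conj_intro {X Y Z : MF} (h₁ : GLPrv (imp X Y)) (h₂ : GLPrv (imp X Z)) :
    GLPrv (imp X (conj Y Z)) :=
  imp_imp_of (taut fun v hv hf => by
    simp only [conj, neg, hv, hf]; cases v Y <;> cases v Z <;> rfl) h₁ h₂

lemma mt (P Q : MF) : GLPrv (imp (imp P Q) (imp (neg Q) (neg P))) :=
  taut fun v hv hf => by simp only [neg, hv, hf]; cases v P <;> cases v Q <;> rfl

lemma box_mono {X Y : MF} (h : GLPrv (imp X Y)) : GLPrv (imp (box X) (box Y)) :=
  mp (k X Y) (nec h)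

lemma box_conj_intro {Z X Y : MF} (h₁ : GLPrv (imp Z (box X))) (h₂ : GLPrv (imp Z (box Y))) :
    GLPrv (imp Z (box (conj X Y))) :=
  have hconj : GLPrv (imp X (imp Y (conj X Y))) := taut fun v hv hf => by
    simp only [conj, neg, hv, hf]; cases v X <;> cases v Y <;> rfl
  imp_mp (imp_trans h₁ (imp_trans (box_mono hconj) (k _ _))) h₂

/-- Löb's axiom for `X ∧ □X`. -/
lemma box_imp_box_conj_box (X : MF) : GLPrv (imp (box X) (box (conj X (box X)))) := by
  have htaut : ∀ P Q, GLPrv (imp (imp P Q) (imp X (imp P (conj X Q)))) := fun P Q =>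
    taut fun v hv hf => by
      simp only [conj, neg, hv, hf]; cases v X <;> cases v P <;> cases v Q <;> rfl
  have hstep := mp (htaut _ _) (box_mono (conj_left X (box X)))
  exact imp_trans (box_mono hstep) (lob _)

lemma conjFin_elim {s : Finset MF} {C : MF} (h : C ∈ s) : GLPrv (imp (conjFin s) C) := by
  suffices ∀ L : List MF, C ∈ L → GLPrv (imp (L.foldr conj top) C) from
    this _ (Finset.mem_toList.2 h)
  intro L hL
  induction L with
  | nil => simp at hL
  | cons D L ih =>
    rcases List.mem_cons.1 hL with rfl | hL
    · exact conj_left _ _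
    · exact imp_trans (conj_right _ _) (ih hL)

lemma conjFin_intro {X : MF} {s : Finset MF} (h : ∀ C ∈ s, GLPrv (imp X C)) :
    GLPrv (imp X (conjFin s)) := by
  suffices ∀ L : List MF, (∀ C ∈ L, GLPrv (imp X C)) → GLPrv (imp X (L.foldr conj top)) from
    this _ fun C hC => h C (Finset.mem_toList.1 hC)
  intro L hL
  induction L with
  | nil => exact top_intro X
  | cons D L ih => exact conj_intro (hL D (by simp)) (ih fun C hC => hL C (by simp [hC]))

lemma box_conjFin_intro {X : MF} {s : Finset MF} (h : ∀ C ∈ s, GLPrv (imp X (box C))) :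
    GLPrv (imp X (box (conjFin s))) := by
  suffices ∀ L : List MF, (∀ C ∈ L, GLPrv (imp X (box C))) →
      GLPrv (imp X (box (L.foldr conj top))) from
    this _ fun C hC => h C (Finset.mem_toList.1 hC)
  intro L hL
  induction L with
  | nil => exact imp_of (nec (imp_refl fal))
  | cons D L ih => exact box_conj_intro (hL D (by simp)) (ih fun C hC => hL C (by simp [hC]))

lemma diagram_elim {s : Finset MF} {C : MF} (g : MF → Bool) (h : C ∈ s) :
    GLPrv (imp (diagram s g) (signed (g C) C)) :=
  conjFin_elim (Finset.mem_image_of_mem _ h)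

lemma diagram_intro {X : MF} {s : Finset MF} {g : MF → Bool}
    (h : ∀ C ∈ s, GLPrv (imp X (signed (g C) C))) : GLPrv (imp X (diagram s g)) :=
  conjFin_intro (by simpa using h)

end GLPrv

structure KModel where
  W : Type
  R : W → W → Prop
  val : W → ℕ → Prop
  trans {u v w : W} : R u v → R v w → R u w
  cwf : WellFounded (Function.swap R)

namespace KModel

def Forces (M : KModel) (w : M.W) : MF → Prop
  | var n => M.val w n
  | fal => False
  | imp A B => Forces M w A → Forces M w B
  | box A => ∀ v, M.R w v → Forces M v A

variable {M : KModel}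

lemma forces_top (w : M.W) : M.Forces w top := fun h => h

lemma forces_conj {w : M.W} {A B : MF} :
    M.Forces w (conj A B) ↔ M.Forces w A ∧ M.Forces w B := by
  simp only [conj, neg, Forces]
  tauto

lemma forces_conjFin {w : M.W} {s : Finset MF} :
    M.Forces w (conjFin s) ↔ ∀ C ∈ s, M.Forces w C := by
  rw [conjFin, ← forall_congr' fun C => imp_congr_left Finset.mem_toList]
  induction s.toList with
  | nil => simpa using forces_top w
  | cons D L ih => simp [forces_conj, ih]

lemma forces_conjFin_RfSet {w : M.W} {X : MF} :
    M.Forces w (conjFin (RfSet X)) ↔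
      ∀ E ∈ X.subF, isBox E = true → M.Forces w E → M.Forces w (unbox E) := by
  simp only [forces_conjFin, RfSet, Finset.forall_mem_image, Finset.mem_filter, and_imp]
  exact Iff.rfl

lemma forces_of_isBox {E : MF} (hE : isBox E = true) {w v : M.W} (h : M.Forces w E)
    (hR : M.R w v) : M.Forces v E ∧ M.Forces v (unbox E) := by
  rw [← box_unbox hE] at h ⊢
  exact ⟨fun u hu => h u (M.trans hR hu), h v hR⟩

end KModel

open KModel

theorem GLPrv.forces {A : MF} (h : GLPrv A) (M : KModel) (w : M.W) : M.Forces w A := by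
  induction h generalizing w with
  | @taut A ht =>
    classical
    have hv := ht (fun B => decide (M.Forces w B))
      (fun B C => by by_cases M.Forces w B <;> by_cases M.Forces w C <;> simp_all [Forces])
      (decide_eq_false id)
    simpa using hv
  | k A B => exact fun hAB hA v hv => hAB v hv (hA v hv)
  | lob A =>
    intro hlob v hv
    induction v using M.cwf.induction with
    | _ v ih => exact hlob v hv fun u hu => ih u hu (M.trans hv hu)
  | mp _ _ ih₁ ih₂ => exact ih₁ w (ih₂ w)
  | nec _ ih => exact fun v _ => ih v

def GLConsistent (Z : MF) : Prop := ¬ GLPrv (neg Z)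

namespace GLConsistent

lemma mono {Z Z' : MF} (h : GLPrv (imp Z Z')) (hZ : GLConsistent Z) : GLConsistent Z' :=
  fun hZ' => hZ (GLPrv.mp (GLPrv.mp (GLPrv.mt Z Z') h) hZ')

lemma exists_conj_signed {Z : MF} (hZ : GLConsistent Z) (C : MF) :
    ∃ b, GLConsistent (conj Z (signed b C)) := by
  by_contra! h
  have hsplit : GLPrv (imp (neg (conj Z C)) (imp (neg (conj Z (neg C))) (neg Z))) :=
    GLPrv.taut fun v hv hf => by
      simp only [conj, neg, hv, hf]; cases v Z <;> cases v C <;> rfl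
  exact hZ (GLPrv.mp (GLPrv.mp hsplit (not_not.1 (h true))) (not_not.1 (h false)))

lemma eq_of_imp_signed {X : MF} (hX : GLConsistent X) {s : Finset MF} {g : MF → Bool}
    (hg : GLPrv (imp X (diagram s g))) {C : MF} (hC : C ∈ s) {b : Bool}
    (h : GLPrv (imp X (signed b C))) : g C = b := by
  by_contra hne
  have hclash : GLPrv (imp (signed b C) (imp (signed (g C) C) fal)) := by
    rw [Bool.eq_not_of_ne hne]
    exact GLPrv.taut fun v hv hf => by
      cases b <;> simp only [signed, cond, Bool.not_true, Bool.not_false, neg, hv, hf] <;>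
        cases v C <;> rfl
  exact hX (GLPrv.imp_imp_of hclash h (GLPrv.imp_trans hg (GLPrv.diagram_elim g hC)))

/-- Lindenbaum's lemma, relative to a finite set of formulas. -/
lemma exists_conj_diagram {Z : MF} (hZ : GLConsistent Z) (s : Finset MF) :
    ∃ g, GLConsistent (conj Z (diagram s g)) := by
  classical
  induction s using Finset.induction_on generalizing Z with
  | empty =>
    exact ⟨fun _ => true, hZ.mono (GLPrv.conj_intro (GLPrv.imp_refl Z)
      (GLPrv.diagram_intro fun C hC => absurd hC (Finset.notMem_empty C)))⟩
  | insert a s ha ih =>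
    obtain ⟨b, hb⟩ := hZ.exists_conj_signed a
    obtain ⟨g, hg⟩ := ih hb
    refine ⟨Function.update g a b, hg.mono (GLPrv.conj_intro
      (GLPrv.imp_trans (GLPrv.conj_left _ _) (GLPrv.conj_left _ _))
      (GLPrv.diagram_intro fun C hC => ?_))⟩
    rcases Finset.mem_insert.1 hC with rfl | hC
    · rw [Function.update_self]
      exact GLPrv.imp_trans (GLPrv.conj_left _ _) (GLPrv.conj_right _ _)
    · rw [Function.update_of_ne (ne_of_mem_of_not_mem hC ha)]
      exact GLPrv.imp_trans (GLPrv.conj_right _ _) (GLPrv.diagram_elim g hC)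

end GLConsistent

namespace Canonical

variable (X : MF)

/-- The worlds of the canonical model of `X` are the consistent sign patterns on the
subformulas of `X`. -/
def World : Type := {g : MF → Bool // GLConsistent (diagram X.subF g)}

def Rel (f g : World X) : Prop :=
  (∀ E ∈ X.subF, isBox E = true → f.1 E = true → g.1 (unbox E) = true ∧ g.1 E = true) ∧
    ∃ E ∈ X.subF, isBox E = true ∧ f.1 E = false ∧ g.1 E = true

def falseBoxes (f : World X) : Finset MF :=
  X.subF.filter fun E => isBox E = true ∧ f.1 E = false

variable {X}

lemma Rel.trans {f g h : World X} (hfg : Rel X f g) (hgh : Rel X g h) : Rel X f h := by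
  obtain ⟨hfg, E, hE, hbox, hf, hg⟩ := hfg
  exact ⟨fun E' hE' hb hf' => hgh.1 E' hE' hb (hfg E' hE' hb hf').2,
    E, hE, hbox, hf, (hgh.1 E hE hbox hg).2⟩

lemma falseBoxes_ssubset_of_rel {f g : World X} (h : Rel X f g) :
    falseBoxes X g ⊂ falseBoxes X f := by
  obtain ⟨hmono, E, hE, hbox, hf, hg⟩ := h
  refine Finset.ssubset_iff_of_subset (fun E' hE' => ?_) |>.2 ⟨E, ?_, ?_⟩
  · simp only [falseBoxes, Finset.mem_filter] at hE' ⊢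
    refine ⟨hE'.1, hE'.2.1, ?_⟩
    by_contra hf'
    simpa [hE'.2.2] using (hmono E' hE'.1 hE'.2.1 (by simpa using hf')).2
  · simp [falseBoxes, hE, hbox, hf]
  · simp [falseBoxes, hg]

lemma Rel.wellFounded : WellFounded (Function.swap (Rel X)) :=
  Subrelation.wf (fun h => Finset.card_lt_card (falseBoxes_ssubset_of_rel h))
    (measure fun f => (falseBoxes X f).card).wf

variable (X) in
def model : KModel :=
  ⟨World X, Rel X, fun f n => f.1 (var n) = true, Rel.trans, Rel.wellFounded⟩

lemma World.val_fal (f : World X) (h : fal ∈ X.subF) : f.1 fal = false :=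
  f.2.eq_of_imp_signed (GLPrv.imp_refl _) h (GLPrv.top_intro _)

lemma World.val_imp (f : World X) {B C : MF} (h : imp B C ∈ X.subF) :
    f.1 (imp B C) = (!f.1 B || f.1 C) := by
  have hsigned : ∀ b c,
      GLPrv (imp (signed b B) (imp (signed c C) (signed (!b || c) (imp B C)))) :=
    fun b c => GLPrv.taut fun v hv hf => by
      cases b <;> cases c <;> simp only [signed, cond, Bool.not_true, Bool.not_false,
        Bool.true_or, Bool.false_or, neg, hv, hf] <;> cases v B <;> cases v C <;> rfl
  exact f.2.eq_of_imp_signed (GLPrv.imp_refl _) h (GLPrv.imp_imp_of (hsigned _ _)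
    (GLPrv.diagram_elim _ (imp_mem_subF_left h)) (GLPrv.diagram_elim _ (imp_mem_subF_right h)))

/-- The existence lemma: the successor is read off from a consistent formula saying that
`□B` holds, `B` fails, and every `□C` true at `f` holds together with `C`; its consistency
is where Löb's axiom enters. -/
lemma World.exists_rel_of_val_box (f : World X) {B : MF} (hB : box B ∈ X.subF)
    (hf : f.1 (box B) = false) : ∃ g, Rel X f g ∧ g.1 B = false := by
  set Q := conjFin ((X.subF.filter fun E => isBox E = true ∧ f.1 E = true).image
    fun E => conj (unbox E) E)
  have hQ_elim : ∀ E ∈ X.subF, isBox E = true → f.1 E = true →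
      GLPrv (imp Q (conj (unbox E) E)) := fun E hE hbox hfE =>
    GLPrv.conjFin_elim (Finset.mem_image_of_mem _ (by simp [hE, hbox, hfE]))
  have hbox_Q : GLPrv (imp (diagram X.subF f.1) (box Q)) := by
    refine GLPrv.box_conjFin_intro fun D hD => ?_
    obtain ⟨E, hE, rfl⟩ := Finset.mem_image.1 hD
    simp only [Finset.mem_filter] at hE
    have hfE := GLPrv.diagram_elim f.1 hE.1
    rw [hE.2.2] at hfE
    rw [← box_unbox hE.2.1] at hfE ⊢
    exact GLPrv.imp_trans hfE (GLPrv.box_imp_box_conj_box _)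
  set Z := conj Q (conj (box B) (neg B))
  have hZ : GLConsistent Z := by
    intro hnZ
    have hlob : GLPrv (imp Q (imp (box B) B)) :=
      GLPrv.mp (GLPrv.taut fun v hv hf => by
        simp only [Z, conj, neg, hv, hf]; cases v Q <;> cases v (box B) <;> cases v B <;> rfl) hnZ
    have hboxB := GLPrv.imp_trans hbox_Q (GLPrv.imp_trans (GLPrv.box_mono hlob) (GLPrv.lob B))
    have hnboxB := GLPrv.diagram_elim f.1 hB
    rw [hf] at hnboxB
    exact f.2 (GLPrv.imp_mp hnboxB hboxB)
  obtain ⟨g, hg⟩ := hZ.exists_conj_diagram X.subF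
  have hval {C : MF} (hC : C ∈ X.subF) {b : Bool} (h : GLPrv (imp Z (signed b C))) : g C = b :=
    hg.eq_of_imp_signed (GLPrv.conj_right _ _) hC (GLPrv.imp_trans (GLPrv.conj_left _ _) h)
  have hZ_right : GLPrv (imp Z (conj (box B) (neg B))) := GLPrv.conj_right _ _
  refine ⟨⟨g, hg.mono (GLPrv.conj_right _ _)⟩, ⟨fun E hE hbox hfE => ⟨?_, ?_⟩,
    box B, hB, rfl, hf, ?_⟩, ?_⟩
  · exact hval (unbox_mem_subF hE hbox) (GLPrv.imp_trans (GLPrv.conj_left _ _)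
      (GLPrv.imp_trans (hQ_elim E hE hbox hfE) (GLPrv.conj_left _ _)))
  · exact hval hE (GLPrv.imp_trans (GLPrv.conj_left _ _)
      (GLPrv.imp_trans (hQ_elim E hE hbox hfE) (GLPrv.conj_right _ _)))
  · exact hval hB (GLPrv.imp_trans hZ_right (GLPrv.conj_left _ _))
  · exact hval (box_mem_subF hB) (GLPrv.imp_trans hZ_right (GLPrv.conj_right _ _))

lemma forces_iff {B : MF} (hB : B ∈ X.subF) (f : World X) :
    (model X).Forces f B ↔ f.1 B = true := by
  induction B generalizing f with
  | var n => exact Iff.rfl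
  | fal => simp [Forces, f.val_fal hB]
  | imp B C ihB ihC =>
    change (_ → _) ↔ _
    rw [f.val_imp hB, ihB (imp_mem_subF_left hB), ihC (imp_mem_subF_right hB)]
    cases f.1 B <;> cases f.1 C <;> simp
  | box B ih =>
    refine ⟨fun h => ?_, fun h g hR => (ih (box_mem_subF hB) g).2 (hR.1 (box B) hB rfl h).1⟩
    by_contra hf
    obtain ⟨g, hR, hg⟩ := f.exists_rel_of_val_box hB (by simpa using hf)
    simpa [hg] using (ih (box_mem_subF hB) g).1 (h g hR)

end Canonical

theorem GLPrv.of_forall_forces {X : MF} (h : ∀ (M : KModel) (w : M.W), M.Forces w X) :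
    GLPrv X := by
  by_contra hX
  have hnX : GLConsistent (neg X) := fun hnnX => hX (GLPrv.mp (GLPrv.taut fun v hv hf => by
    simp only [neg, hv, hf]; cases v X <;> rfl) hnnX)
  obtain ⟨g, hg⟩ := hnX.exists_conj_diagram X.subF
  let f : Canonical.World X := ⟨g, hg.mono (GLPrv.conj_right _ _)⟩
  have hfX : g X = false :=
    hg.eq_of_imp_signed (GLPrv.conj_right _ _) (mem_subF_self X) (GLPrv.conj_left _ _)
  simpa [f, hfX] using (Canonical.forces_iff (mem_subF_self X) f).1 (h (Canonical.model X) f)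

namespace KModel

variable {M : KModel}

lemma forces_boxn_of_counter (P : M.W → Prop) (μ : M.W → ℕ) {N : ℕ}
    (hbound : ∀ v, P v → μ v < N) (hstep : ∀ v u, P v → M.R v u → P u ∧ μ v < μ u)
    (C : MF) :
    ∀ k v, P v → N ≤ μ v + k → M.Forces v (boxn k C) := by
  intro k
  induction k with
  | zero => exact fun v hv hk => absurd (hbound v hv) (by omega)
  | succ k ih =>
    intro v hv hk u hR
    obtain ⟨hu, hlt⟩ := hstep v u hv hR
    exact ih u hu (by omega)

/-- The counter is the number of boxes of `S` whose reflection holds: it grows along `R`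
because a box that is true persists together with its body. -/
lemma forces_boxn_card_of_not_reflection (P : M.W → Prop) (hP : ∀ v u, P v → M.R v u → P u)
    {S : Finset MF} (hS : ∀ E ∈ S, isBox E = true)
    (hrefl : ∀ v, P v → ∃ E ∈ S, M.Forces v E ∧ ¬ M.Forces v (unbox E)) (C : MF)
    {w : M.W} (hw : P w) : M.Forces w (boxn S.card C) := by
  classical
  let reflected (v : M.W) := S.filter fun E => M.Forces v E ∧ M.Forces v (unbox E)
  refine forces_boxn_of_counter P (fun v => (reflected v).card) (N := S.card) (fun v hv => ?_)
    (fun v u hv hR => ⟨hP v u hv hR, ?_⟩) C _ w hw (by omega)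
  · obtain ⟨E, hE, -, hnE⟩ := hrefl v hv
    exact Finset.card_lt_card (Finset.filter_ssubset.2 ⟨E, hE, not_and_of_not_right _ hnE⟩)
  · obtain ⟨E, hE, hvE, hnE⟩ := hrefl v hv
    refine Finset.card_lt_card
      (Finset.ssubset_iff_of_subset (fun E' hE' => ?_) |>.2 ⟨E, ?_, ?_⟩)
    · simp only [reflected, Finset.mem_filter] at hE' ⊢
      exact ⟨hE'.1, forces_of_isBox (hS E' hE'.1) hE'.2.1 hR⟩
    · simpa [reflected, hE] using forces_of_isBox (hS E hE) hvE hR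
    · simp [reflected, hnE]

end KModel

theorem GLPrv.imp_dian_of_reflection {A : MF}
    (h : GLPrv (imp (conjFin (RfSet (box A))) (neg (box A)))) :
    GLPrv (imp (dian (cx A + 1) top) (neg (box A))) := by
  refine GLPrv.of_forall_forces fun M w hdia hA => hdia ?_
  rw [← card_filter_isBox_subF_box]
  refine forces_boxn_card_of_not_reflection (fun v => M.Forces v (box A))
    (fun v u hv hR => (forces_of_isBox rfl hv hR).1) (fun E hE => (Finset.mem_filter.1 hE).2)
    (fun v hv => ?_) _ hA
  have hRf : ¬ M.Forces v (conjFin (RfSet (box A))) := fun hRf => h.forces M v hRf hv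
  rw [forces_conjFin_RfSet] at hRf
  push Not at hRf
  obtain ⟨E, hE, hbox, hvE, hnE⟩ := hRf
  exact ⟨E, Finset.mem_filter.2 ⟨hE, hbox⟩, hvE, hnE⟩

lemma ExtPrv.of_axioms {Ax Ax' : Set MF} (h : ∀ A ∈ Ax, ∀ s, ExtPrv Ax' (A.subst s)) {B : MF}
    (hB : ExtPrv Ax B) : ExtPrv Ax' B := by
  induction hB with
  | gl h => exact gl h
  | ax s hA => exact h _ hA s
  | mp _ _ ih₁ ih₂ => exact mp ih₁ ih₂

lemma GLomegaPrv.dian_top (n : ℕ) : GLomegaPrv (dian n top) :=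
  subst_dian_top var n ▸ ExtPrv.ax var ⟨n, rfl⟩

lemma GLSPrv.dian_top (n : ℕ) : GLSPrv (dian n top) := by
  induction n with
  | zero =>
    exact ExtPrv.gl (GLPrv.taut fun v hv hf => by simp only [dian, boxn, top, neg, hv, hf]; rfl)
  | succ n ih =>
    have hax : GLSPrv (imp (box (boxn n (neg top))) (boxn n (neg top))) :=
      ExtPrv.ax (fun _ => boxn n (neg top)) (Set.mem_singleton _)
    exact ExtPrv.mp (ExtPrv.mp (ExtPrv.gl (GLPrv.mt _ _)) hax) ih

lemma GLSPrv.of_GLomegaPrv {B : MF} (h : GLomegaPrv B) : GLSPrv B :=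
  ExtPrv.of_axioms (by rintro _ ⟨n, rfl⟩ s; rw [subst_dian_top]; exact GLSPrv.dian_top n) h

namespace KModel

def chainAboveRel (M : KModel) (w₀ : M.W) : ℕ ⊕ M.W → ℕ ⊕ M.W → Prop
  | .inl i, .inl j => j < i
  | .inl _, .inr v => M.R w₀ v
  | .inr v, .inr u => M.R v u
  | .inr _, .inl _ => False

/-- `M` together with an infinite descending chain `⋯ R 2 R 1 R 0` of copies of `w₀`, each of
which sees every successor of `w₀`. -/
def chainAbove (M : KModel) (w₀ : M.W) : KModel where
  W := ℕ ⊕ M.W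
  R := chainAboveRel M w₀
  val
    | .inl _ => M.val w₀
    | .inr v => M.val v
  trans {x y z} hxy hyz := by
    match x, y, z with
    | .inl _, .inl _, .inl _ => exact lt_trans hyz hxy
    | .inl _, .inl _, .inr _ => exact hyz
    | .inl _, .inr _, .inr _ => exact M.trans hxy hyz
    | .inr _, .inr _, .inr _ => exact M.trans hxy hyz
  cwf := by
    have hinr (v : M.W) : Acc (Function.swap (chainAboveRel M w₀)) (.inr v) := by
      induction v using M.cwf.induction with
      | _ v ih =>
        exact Acc.intro _ fun y hy => match y, hy with
          | .inr u, hu => ih u hu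
          | .inl _, h => h.elim
    have hinl (i : ℕ) : Acc (Function.swap (chainAboveRel M w₀)) (.inl i) := by
      induction i using Nat.strong_induction_on with
      | _ i ih =>
        exact Acc.intro _ fun y hy => match y, hy with
          | .inl j, hj => ih j hj
          | .inr u, _ => hinr u
    exact ⟨fun | .inl i => hinl i | .inr v => hinr v⟩

variable {M : KModel} {w₀ : M.W}

lemma forces_chainAbove_inr (B : MF) (v : M.W) :
    (M.chainAbove w₀).Forces (.inr v) B ↔ M.Forces v B := by
  induction B generalizing v with
  | var n => exact Iff.rfl
  | fal => exact Iff.rfl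
  | imp B C ihB ihC => exact imp_congr (ihB v) (ihC v)
  | box B ih =>
    exact ⟨fun h u hu => (ih u).1 (h (.inr u) hu),
      fun h => fun | .inr u, hu => (ih u).2 (h u hu) | .inl _, h => h.elim⟩

lemma forces_chainAbove_inl {X : MF}
    (hrefl : ∀ E ∈ X.subF, isBox E = true → M.Forces w₀ E → M.Forces w₀ (unbox E))
    {B : MF} (hB : B ∈ X.subF) (i : ℕ) :
    (M.chainAbove w₀).Forces (.inl i) B ↔ M.Forces w₀ B := by
  induction B generalizing i with
  | var n => exact Iff.rfl
  | fal => exact Iff.rfl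
  | imp B C ihB ihC =>
    exact imp_congr (ihB (imp_mem_subF_left hB) i) (ihC (imp_mem_subF_right hB) i)
  | box B ih =>
    refine ⟨fun h v hv => (forces_chainAbove_inr B v).1 (h (.inr v) hv), fun h => ?_⟩
    rintro (j | v) hR
    · exact (ih (box_mem_subF hB) j).2 (hrefl _ hB rfl h)
    · exact (forces_chainAbove_inr B v).2 (h v hR)

end KModel

open Filter in
/-- Along the chain, an instance `□C → C` of the reflection axiom is eventually true: either
`□C` holds everywhere on the chain, or it fails from some point on. -/
lemma GLSPrv.eventually_forces_inl {B : MF} (h : GLSPrv B) (M : KModel) (w₀ : M.W) :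
    ∀ᶠ i in atTop, (M.chainAbove w₀).Forces (.inl i) B := by
  induction h with
  | gl h => exact Eventually.of_forall fun i => h.forces _ _
  | ax s hA =>
    rw [Set.mem_singleton_iff.1 hA]
    by_cases hall : ∀ i, (M.chainAbove w₀).Forces (.inl i) (box (s 0))
    · exact Eventually.of_forall fun i _ => hall (i + 1) (.inl i) (Nat.lt_succ_self i)
    · push Not at hall
      obtain ⟨i₀, hi₀⟩ := hall
      refine eventually_atTop.2 ⟨i₀, fun i hi hbox => (hi₀ ?_).elim⟩
      rcases hi.eq_or_lt with rfl | hlt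
      · exact hbox
      · exact (forces_of_isBox rfl hbox
          (show (M.chainAbove w₀).R (.inl i) (.inl i₀) from hlt)).1
  | mp _ _ ih₁ ih₂ => exact (ih₁.and ih₂).mono fun i h => h.1 h.2

theorem GLPrv.reflection_imp_of_GLSPrv {A : MF} (h : GLSPrv (neg (box A))) :
    GLPrv (imp (conjFin (RfSet (box A))) (neg (box A))) := by
  refine GLPrv.of_forall_forces fun M w hRf hA => ?_
  rw [forces_conjFin_RfSet] at hRf
  obtain ⟨i, hi⟩ := (h.eventually_forces_inl M w).exists
  exact hi ((forces_chainAbove_inl hRf (mem_subF_self _) i).2 hA)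

/-- the four characterizations of `GL_ω ⊢ ¬□A` are equivalent. -/
theorem negbox_tfae (A : MF) :
    List.TFAE
      [GLPrv (MF.imp (MF.conjFin (MF.RfSet (MF.box A))) (MF.neg (MF.box A))),
       GLPrv (MF.imp (MF.dian (MF.cx A + 1) MF.top) (MF.neg (MF.box A))),
       GLomegaPrv (MF.neg (MF.box A)),
       GLSPrv (MF.neg (MF.box A))] := by
  tfae_have 1 → 2 := GLPrv.imp_dian_of_reflection
  tfae_have 2 → 3 := fun h => ExtPrv.mp (ExtPrv.gl h) (GLomegaPrv.dian_top _)
  tfae_have 3 → 4 := GLSPrv.of_GLomegaPrv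
  tfae_have 4 → 1 := GLPrv.reflection_imp_of_GLSPrv
  tfae_finish
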